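/- arXiv:2306.00319 — 2 statements merged into one kernel-verified Lean document; each statement's English description precedes it below -/
import Mathlib

section
/- For every smooth vector field u : ℝ² → ℝ² with compact support contained in ℝ²₊ and every measurable v : ℝ²₊ → ℝ², one has (∫_{ℝ²₊} |u(x)|² |v(x)|² dx)^{1/2} ≤ ‖∇u‖_{L²(ℝ²₊)} (∫₀^∞ x₂ ‖v(·,x₂)‖²_{L^∞(ℝ)} dx₂)^{1/2}. -/
open MeasureTheory Filter Set
open scoped ENNReal Topology

noncomputable section

/-- The open upper half-plane `ℝ²₊`. -/
def UHP : Set (ℝ × ℝ) := {x | 0 < x.2}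

/-- The Euclidean norm `|x|` of a point of `ℝ²`. -/
def enorm2 (x : ℝ × ℝ) : ℝ := Real.sqrt (x.1 ^ 2 + x.2 ^ 2)

/-- The weights `ω₀, ω₁, ω₂` on the upper half-plane. -/
def wt : Fin 3 → ℝ × ℝ → ℝ := fun i x =>
  if i = 0 then x.2 ^ 2 * enorm2 x / (x.2 + 4 * enorm2 x)
  else if i = 1 then x.2 * enorm2 x
  else x.2 ^ 2 / 4

/-- The partial derivative `∂₁ f`. -/
def D1 (f : ℝ × ℝ → ℝ) (x : ℝ × ℝ) : ℝ := fderiv ℝ f x (1, 0)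

/-- The partial derivative `∂₂ f`. -/
def D2 (f : ℝ × ℝ → ℝ) (x : ℝ × ℝ) : ℝ := fderiv ℝ f x (0, 1)

/-- `|∇f|²`. -/
def gradSq (f : ℝ × ℝ → ℝ) (x : ℝ × ℝ) : ℝ := (D1 f x) ^ 2 + (D2 f x) ^ 2

/-- Smooth scalar functions compactly supported inside `D`. -/
def TestFun (D : Set (ℝ × ℝ)) (f : ℝ × ℝ → ℝ) : Prop :=
  ContDiff ℝ (⊤ : ℕ∞) f ∧ HasCompactSupport f ∧ tsupport f ⊆ D

/-- `C_{c,σ}^∞(D)`: smooth divergence-free vector fields compactly supported inside `D`. -/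
def TestVec (D : Set (ℝ × ℝ)) (v1 v2 : ℝ × ℝ → ℝ) : Prop :=
  TestFun D v1 ∧ TestFun D v2 ∧ ∀ x, D1 v1 x + D2 v2 x = 0

/-- `g` is the distributional gradient of `f` on the open set `D`. -/
def IsDistGrad (D : Set (ℝ × ℝ)) (f : ℝ × ℝ → ℝ) (g : ℝ × ℝ → ℝ × ℝ) : Prop :=
  ∀ φ : ℝ × ℝ → ℝ, TestFun D φ →
    ((∫ x in D, f x * D1 φ x) = -(∫ x in D, (g x).1 * φ x)) ∧
    ((∫ x in D, f x * D2 φ x) = -(∫ x in D, (g x).2 * φ x))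

/-- Membership `u = (u1,u2) ∈ Ḣ¹₀,σ(D)`, with `g1, g2` the distributional gradients of
`u1, u2`. -/
structure HSigma (D : Set (ℝ × ℝ)) (u1 u2 : ℝ × ℝ → ℝ) (g1 g2 : ℝ × ℝ → ℝ × ℝ) : Prop where
  locInt1 : LocallyIntegrableOn u1 D
  locInt2 : LocallyIntegrableOn u2 D
  distGrad1 : IsDistGrad D u1 g1
  distGrad2 : IsDistGrad D u2 g2
  gradL2 : IntegrableOn
    (fun x => (g1 x).1 ^ 2 + (g1 x).2 ^ 2 + (g2 x).1 ^ 2 + (g2 x).2 ^ 2) D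
  approx : ∃ w1 w2 : ℕ → ℝ × ℝ → ℝ, (∀ n, TestVec D (w1 n) (w2 n)) ∧
    Tendsto (fun n => ∫ x in D,
      ((D1 (w1 n) x - (g1 x).1) ^ 2 + (D2 (w1 n) x - (g1 x).2) ^ 2 +
       (D1 (w2 n) x - (g2 x).1) ^ 2 + (D2 (w2 n) x - (g2 x).2) ^ 2)) atTop (𝓝 0)

/-- `u` is a weak solution of the stationary Navier–Stokes system on `D` with forcing
`div F`, where `F` has rows `(F11, F12)` and `(F21, F22)` and `g1, g2` are the
distributional gradients of the components of `u`. -/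
def WeakSol (D : Set (ℝ × ℝ)) (F11 F12 F21 F22 u1 u2 : ℝ × ℝ → ℝ)
    (g1 g2 : ℝ × ℝ → ℝ × ℝ) : Prop :=
  ∀ φ1 φ2 : ℝ × ℝ → ℝ, TestVec D φ1 φ2 →
    (∫ x in D, ((g1 x).1 * D1 φ1 x + (g1 x).2 * D2 φ1 x +
                (g2 x).1 * D1 φ2 x + (g2 x).2 * D2 φ2 x +
                (u1 x * (g1 x).1 + u2 x * (g1 x).2) * φ1 x +
                (u1 x * (g2 x).1 + u2 x * (g2 x).2) * φ2 x)) =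
    ∫ x in D, (F11 x * D1 φ1 x + F12 x * D2 φ1 x + F21 x * D1 φ2 x + F22 x * D2 φ2 x)

/-- The energy inequality `∫ |∇u|² ≤ ∫ F·∇u`. -/
def EnergyIneq (D : Set (ℝ × ℝ)) (F11 F12 F21 F22 : ℝ × ℝ → ℝ)
    (g1 g2 : ℝ × ℝ → ℝ × ℝ) : Prop :=
  (∫ x in D, ((g1 x).1 ^ 2 + (g1 x).2 ^ 2 + (g2 x).1 ^ 2 + (g2 x).2 ^ 2)) ≤
    ∫ x in D, (F11 x * (g1 x).1 + F12 x * (g1 x).2 + F21 x * (g2 x).1 + F22 x * (g2 x).2)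

/-- `F ∈ L²(D)^{2×2}`. -/
def FL2 (D : Set (ℝ × ℝ)) (F11 F12 F21 F22 : ℝ × ℝ → ℝ) : Prop :=
  MemLp F11 2 (volume.restrict D) ∧ MemLp F12 2 (volume.restrict D) ∧
  MemLp F21 2 (volume.restrict D) ∧ MemLp F22 2 (volume.restrict D)

/-- The weighted norm `‖v‖_{L^∞(ℝ²₊, ω_i^{1/2})}`, valued in `ℝ≥0∞`. -/
def wLinf (i : Fin 3) (v1 v2 : ℝ × ℝ → ℝ) : ℝ≥0∞ :=
  essSup (fun x => ENNReal.ofReal (Real.sqrt (wt i x) * Real.sqrt (v1 x ^ 2 + v2 x ^ 2)))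
    (volume.restrict UHP)

/-- The square `‖v‖_X² = ∫₀^∞ x₂ ‖v(·,x₂)‖²_{L^∞(ℝ)} dx₂`, valued in `ℝ≥0∞`. -/
def XnormSq (v1 v2 : ℝ × ℝ → ℝ) : ℝ≥0∞ :=
  ∫⁻ t in Set.Ioi (0 : ℝ), ENNReal.ofReal t *
    (essSup (fun s => ENNReal.ofReal (Real.sqrt (v1 (s, t) ^ 2 + v2 (s, t) ^ 2))) volume) ^ 2


section ProductEstimateHelpers

lemma contD1 {f : ℝ × ℝ → ℝ} (hf : ContDiff ℝ (⊤ : ℕ∞) f) : Continuous (D1 f) := by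
  have h : Continuous (fderiv ℝ f) := (hf.fderiv_right (m := 0) (by simp)).continuous
  exact ((ContinuousLinearMap.apply ℝ ℝ (((1:ℝ),(0:ℝ)) : ℝ × ℝ)).continuous).comp h

lemma contD2 {f : ℝ × ℝ → ℝ} (hf : ContDiff ℝ (⊤ : ℕ∞) f) : Continuous (D2 f) := by
  have h : Continuous (fderiv ℝ f) := (hf.fderiv_right (m := 0) (by simp)).continuous
  exact ((ContinuousLinearMap.apply ℝ ℝ (((0:ℝ),(1:ℝ)) : ℝ × ℝ)).continuous).comp h

lemma gradSq_cont {f : ℝ × ℝ → ℝ} (hf : ContDiff ℝ (⊤ : ℕ∞) f) : Continuous (gradSq f) :=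
  ((contD1 hf).pow 2).add ((contD2 hf).pow 2)

lemma gradSq_hcs {f : ℝ × ℝ → ℝ} (hf : HasCompactSupport f) :
    HasCompactSupport (gradSq f) := by
  have h := (hf.fderiv ℝ).comp_left
    (g := fun L : (ℝ × ℝ) →L[ℝ] ℝ => (L (1,0))^2 + (L (0,1))^2) (by simp)
  exact h

lemma restrict_UHP_eq :
    (volume : Measure (ℝ × ℝ)).restrict UHP
      = (volume : Measure ℝ).prod ((volume : Measure ℝ).restrict (Ioi (0:ℝ))) := by
  have h : UHP = (univ : Set ℝ) ×ˢ Ioi (0:ℝ) := by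
    ext x; simp [UHP, Set.mem_prod]
  rw [h, Measure.volume_eq_prod, ← Measure.prod_restrict, Measure.restrict_univ]

lemma lint_UHP (f : ℝ × ℝ → ℝ≥0∞) (hf : Measurable f) :
    ∫⁻ x in UHP, f x = ∫⁻ s : ℝ, ∫⁻ t in Ioi (0:ℝ), f (s, t) := by
  rw [restrict_UHP_eq]; exact lintegral_prod f hf.aemeasurable

lemma lint_UHP_symm (f : ℝ × ℝ → ℝ≥0∞) (hf : Measurable f) :
    ∫⁻ x in UHP, f x = ∫⁻ t in Ioi (0:ℝ), ∫⁻ s : ℝ, f (s, t) := by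
  rw [restrict_UHP_eq]; exact lintegral_prod_symm f hf.aemeasurable

lemma sq_rpow_half (x : ℝ≥0∞) : (x ^ (1/2:ℝ)) ^ 2 = x := by
  rw [← ENNReal.rpow_natCast (x ^ (1/2:ℝ)) 2, ← ENNReal.rpow_mul]
  norm_num

lemma key_ftc (f : ℝ × ℝ → ℝ) (hf : TestFun UHP f) (s t : ℝ) (ht : 0 < t) :
    ENNReal.ofReal (f (s, t) ^ 2) ≤
      ENNReal.ofReal t * ∫⁻ τ in Ioi (0:ℝ), ENNReal.ofReal (D2 f (s, τ) ^ 2) := by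
  obtain ⟨hsm, hcs, hsupp⟩ := hf
  have hD2 : Continuous (D2 f) := contD2 hsm
  have hD2s : Continuous fun τ : ℝ => D2 f (s, τ) :=
    hD2.comp (continuous_const.prodMk continuous_id)
  have hder : ∀ τ : ℝ, HasDerivAt (fun τ => f (s, τ)) (D2 f (s, τ)) τ := by
    intro τ
    have h1 : HasDerivAt (fun τ : ℝ => (s, τ)) (((0:ℝ), (1:ℝ)) : ℝ × ℝ) τ :=
      (hasDerivAt_const τ s).prodMk (hasDerivAt_id τ)
    exact ((hsm.differentiable (by simp) (s, τ)).hasFDerivAt).comp_hasDerivAt τ h1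
  have hzero : f (s, 0) = 0 := by
    apply image_eq_zero_of_notMem_tsupport
    intro h
    exact lt_irrefl (0:ℝ) (hsupp h)
  have hInt : IntervalIntegrable (fun τ => D2 f (s, τ)) volume 0 t :=
    hD2s.intervalIntegrable 0 t
  have heq : ∫ τ in (0:ℝ)..t, D2 f (s, τ) = f (s, t) := by
    rw [intervalIntegral.integral_eq_sub_of_hasDerivAt (fun τ _ => hder τ) hInt, hzero, sub_zero]
  have habs : |f (s, t)| ≤ ∫ τ in Ioc (0:ℝ) t, |D2 f (s, τ)| := by
    rw [← heq]
    calc |∫ τ in (0:ℝ)..t, D2 f (s, τ)| ≤ ∫ τ in (0:ℝ)..t, |D2 f (s, τ)| :=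
          intervalIntegral.abs_integral_le_integral_abs ht.le
      _ = ∫ τ in Ioc (0:ℝ) t, |D2 f (s, τ)| := intervalIntegral.integral_of_le ht.le
  have hIntAbs : IntegrableOn (fun τ => |D2 f (s, τ)|) (Ioc (0:ℝ) t) := hD2s.abs.integrableOn_Ioc
  set g : ℝ → ℝ≥0∞ := fun τ => ENNReal.ofReal |D2 f (s, τ)| with hgdef
  have hgm : Measurable g := ENNReal.measurable_ofReal.comp hD2s.abs.measurable
  have h1 : ENNReal.ofReal |f (s, t)| ≤ ∫⁻ τ in Ioc (0:ℝ) t, g τ := by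
    calc ENNReal.ofReal |f (s, t)| ≤ ENNReal.ofReal (∫ τ in Ioc (0:ℝ) t, |D2 f (s, τ)|) :=
          ENNReal.ofReal_le_ofReal habs
      _ = _ := ofReal_integral_eq_lintegral_ofReal hIntAbs
          (Filter.Eventually.of_forall fun τ => abs_nonneg _)
  have hold : ∫⁻ τ in Ioc (0:ℝ) t, g τ ≤
      (∫⁻ τ in Ioc (0:ℝ) t, g τ ^ (2:ℝ)) ^ (1/2:ℝ) * (ENNReal.ofReal t) ^ (1/2:ℝ) := by
    have hconj : (2:ℝ).HolderConjugate 2 := Real.HolderConjugate.two_two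
    have := ENNReal.lintegral_mul_le_Lp_mul_Lq (volume.restrict (Ioc (0:ℝ) t)) hconj
      hgm.aemeasurable (aemeasurable_const (b := (1:ℝ≥0∞)))
    simp only [Pi.mul_apply, mul_one, ENNReal.one_rpow, one_mul] at this
    calc ∫⁻ τ in Ioc (0:ℝ) t, g τ
        ≤ (∫⁻ τ in Ioc (0:ℝ) t, g τ ^ (2:ℝ)) ^ (1/(2:ℝ)) *
            (∫⁻ _ in Ioc (0:ℝ) t, (1:ℝ≥0∞)) ^ (1/(2:ℝ)) := this
      _ = _ := by
          rw [setLIntegral_one, Real.volume_Ioc, sub_zero]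
  have hg2 : ∀ τ : ℝ, g τ ^ (2:ℝ) = ENNReal.ofReal (D2 f (s, τ) ^ 2) := by
    intro τ
    rw [hgdef]
    show (ENNReal.ofReal |D2 f (s, τ)|) ^ ((2:ℕ):ℝ) = _
    rw [ENNReal.rpow_natCast, ← ENNReal.ofReal_pow (abs_nonneg _), sq_abs]
  have key : ENNReal.ofReal (f (s, t) ^ 2) ≤
      (∫⁻ τ in Ioc (0:ℝ) t, ENNReal.ofReal (D2 f (s, τ) ^ 2)) * ENNReal.ofReal t := by
    have h2 : ENNReal.ofReal (f (s, t) ^ 2) = (ENNReal.ofReal |f (s, t)|) ^ 2 := by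
      rw [← ENNReal.ofReal_pow (abs_nonneg _), sq_abs]
    rw [h2]
    calc (ENNReal.ofReal |f (s, t)|) ^ 2
        ≤ ((∫⁻ τ in Ioc (0:ℝ) t, g τ ^ (2:ℝ)) ^ (1/2:ℝ) * (ENNReal.ofReal t) ^ (1/2:ℝ)) ^ 2 :=
          pow_le_pow_left₀ zero_le (h1.trans hold) 2
      _ = (∫⁻ τ in Ioc (0:ℝ) t, g τ ^ (2:ℝ)) * ENNReal.ofReal t := by
          rw [mul_pow, sq_rpow_half, sq_rpow_half]
      _ = _ := by simp_rw [hg2]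
  calc ENNReal.ofReal (f (s, t) ^ 2)
      ≤ (∫⁻ τ in Ioc (0:ℝ) t, ENNReal.ofReal (D2 f (s, τ) ^ 2)) * ENNReal.ofReal t := key
    _ ≤ (∫⁻ τ in Ioi (0:ℝ), ENNReal.ofReal (D2 f (s, τ) ^ 2)) * ENNReal.ofReal t :=
        mul_le_mul_left (lintegral_mono_set Ioc_subset_Ioi_self) _
    _ = _ := mul_comm _ _

lemma slice_bound (u1 u2 : ℝ × ℝ → ℝ) (hu1 : TestFun UHP u1) (hu2 : TestFun UHP u2)
    (t : ℝ) (ht : 0 < t) :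
    (∫⁻ s : ℝ, ENNReal.ofReal (u1 (s,t) ^ 2 + u2 (s,t) ^ 2)) ≤
      ENNReal.ofReal t * ∫⁻ x in UHP, ENNReal.ofReal (gradSq u1 x + gradSq u2 x) := by
  have hD21 : Continuous (D2 u1) := contD2 hu1.1
  have hD22 : Continuous (D2 u2) := contD2 hu2.1
  have hmeas : Measurable fun x : ℝ × ℝ => ENNReal.ofReal (D2 u1 x ^ 2 + D2 u2 x ^ 2) :=
    ENNReal.measurable_ofReal.comp ((hD21.pow 2).add (hD22.pow 2)).measurable
  calc ∫⁻ s : ℝ, ENNReal.ofReal (u1 (s,t) ^ 2 + u2 (s,t) ^ 2)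
      ≤ ∫⁻ s : ℝ, ENNReal.ofReal t *
          ∫⁻ τ in Ioi (0:ℝ), ENNReal.ofReal (D2 u1 (s,τ) ^ 2 + D2 u2 (s,τ) ^ 2) := by
        apply lintegral_mono
        intro s
        dsimp only
        rw [ENNReal.ofReal_add (by positivity) (by positivity)]
        have hm1 : Measurable fun τ : ℝ => ENNReal.ofReal (D2 u1 (s,τ) ^ 2) :=
          ENNReal.measurable_ofReal.comp
            (((hD21.comp (continuous_const.prodMk continuous_id)).pow 2).measurable)
        calc ENNReal.ofReal (u1 (s,t) ^ 2) + ENNReal.ofReal (u2 (s,t) ^ 2)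
            ≤ ENNReal.ofReal t * (∫⁻ τ in Ioi (0:ℝ), ENNReal.ofReal (D2 u1 (s,τ) ^ 2)) +
              ENNReal.ofReal t * (∫⁻ τ in Ioi (0:ℝ), ENNReal.ofReal (D2 u2 (s,τ) ^ 2)) :=
              add_le_add (key_ftc u1 hu1 s t ht) (key_ftc u2 hu2 s t ht)
          _ = ENNReal.ofReal t *
              ∫⁻ τ in Ioi (0:ℝ), ENNReal.ofReal (D2 u1 (s,τ) ^ 2 + D2 u2 (s,τ) ^ 2) := by
              rw [← mul_add, ← lintegral_add_left hm1]
              congr 1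
              apply lintegral_congr
              intro τ
              rw [ENNReal.ofReal_add (by positivity) (by positivity)]
    _ = ENNReal.ofReal t * ∫⁻ s : ℝ,
          ∫⁻ τ in Ioi (0:ℝ), ENNReal.ofReal (D2 u1 (s,τ) ^ 2 + D2 u2 (s,τ) ^ 2) :=
        lintegral_const_mul' _ _ ENNReal.ofReal_ne_top
    _ = ENNReal.ofReal t * ∫⁻ x in UHP, ENNReal.ofReal (D2 u1 x ^ 2 + D2 u2 x ^ 2) := by
        rw [lint_UHP _ hmeas]
    _ ≤ ENNReal.ofReal t * ∫⁻ x in UHP, ENNReal.ofReal (gradSq u1 x + gradSq u2 x) := by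
        apply mul_le_mul_right
        apply lintegral_mono
        intro x
        apply ENNReal.ofReal_le_ofReal
        unfold gradSq
        nlinarith [sq_nonneg (D1 u1 x), sq_nonneg (D1 u2 x)]

end ProductEstimateHelpers

/-- Mixed-norm product estimate: `‖ |u| |v| ‖_{L²(ℝ²₊)} ≤ ‖∇u‖_{L²(ℝ²₊)} ‖v‖_X`. -/
theorem product_estimate_X (u1 u2 : ℝ × ℝ → ℝ)
    (hu1 : TestFun UHP u1) (hu2 : TestFun UHP u2)
    (v1 v2 : ℝ × ℝ → ℝ) (hv1 : Measurable v1) (hv2 : Measurable v2) :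
    (∫⁻ x in UHP, ENNReal.ofReal ((u1 x ^ 2 + u2 x ^ 2) * (v1 x ^ 2 + v2 x ^ 2)))
        ^ (1/2 : ℝ) ≤
      ENNReal.ofReal (Real.sqrt (∫ x in UHP, (gradSq u1 x + gradSq u2 x))) *
        (XnormSq v1 v2) ^ (1/2 : ℝ) := by
  obtain ⟨hu1s, hu1c, hu1sup⟩ := id hu1
  obtain ⟨hu2s, hu2c, hu2sup⟩ := id hu2
  have hu1cont : Continuous u1 := hu1s.continuous
  have hu2cont : Continuous u2 := hu2s.continuous
  set A := ∫⁻ x in UHP, ENNReal.ofReal (gradSq u1 x + gradSq u2 x) with hAdef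
  set E : ℝ → ℝ≥0∞ := fun t =>
    essSup (fun s => ENNReal.ofReal (Real.sqrt (v1 (s, t) ^ 2 + v2 (s, t) ^ 2))) volume
    with hEdef
  have hFmeas : Measurable fun x : ℝ × ℝ =>
      ENNReal.ofReal ((u1 x ^ 2 + u2 x ^ 2) * (v1 x ^ 2 + v2 x ^ 2)) := by
    apply ENNReal.measurable_ofReal.comp
    exact (((hu1cont.pow 2).add (hu2cont.pow 2)).measurable).mul
      ((hv1.pow_const 2).add (hv2.pow_const 2))
  have hgcont : Continuous fun x => gradSq u1 x + gradSq u2 x :=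
    (gradSq_cont hu1s).add (gradSq_cont hu2s)
  have hghcs : HasCompactSupport fun x => gradSq u1 x + gradSq u2 x :=
    (gradSq_hcs hu1c).add (gradSq_hcs hu2c)
  have hgint : IntegrableOn (fun x => gradSq u1 x + gradSq u2 x) UHP :=
    (hgcont.integrable_of_hasCompactSupport hghcs).integrableOn
  have hG0 : 0 ≤ ∫ x in UHP, (gradSq u1 x + gradSq u2 x) :=
    integral_nonneg fun x => by unfold gradSq; positivity
  have hAG : A = ENNReal.ofReal (∫ x in UHP, (gradSq u1 x + gradSq u2 x)) :=
    (ofReal_integral_eq_lintegral_ofReal hgint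
      (Filter.Eventually.of_forall fun x => by unfold gradSq; positivity)).symm
  have hAne : A ≠ ⊤ := by rw [hAG]; exact ENNReal.ofReal_ne_top
  have hbound : ∀ t ∈ Ioi (0:ℝ),
      (∫⁻ s : ℝ, ENNReal.ofReal ((u1 (s,t) ^ 2 + u2 (s,t) ^ 2) * (v1 (s,t) ^ 2 + v2 (s,t) ^ 2)))
        ≤ A * (ENNReal.ofReal t * E t ^ 2) := by
    intro t ht
    have hae : ∀ᵐ s : ℝ,
        ENNReal.ofReal ((u1 (s,t) ^ 2 + u2 (s,t) ^ 2) * (v1 (s,t) ^ 2 + v2 (s,t) ^ 2)) ≤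
          ENNReal.ofReal (u1 (s,t) ^ 2 + u2 (s,t) ^ 2) * E t ^ 2 := by
      filter_upwards [ENNReal.ae_le_essSup
        (fun s => ENNReal.ofReal (Real.sqrt (v1 (s,t) ^ 2 + v2 (s,t) ^ 2)))] with s hs
      rw [ENNReal.ofReal_mul (by positivity)]
      apply mul_le_mul_right
      have h2 : ENNReal.ofReal (v1 (s,t) ^ 2 + v2 (s,t) ^ 2) =
          (ENNReal.ofReal (Real.sqrt (v1 (s,t) ^ 2 + v2 (s,t) ^ 2))) ^ 2 := by
        rw [← ENNReal.ofReal_pow (Real.sqrt_nonneg _), Real.sq_sqrt (by positivity)]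
      rw [h2]
      exact pow_le_pow_left₀ zero_le hs 2
    have humeas : Measurable fun s : ℝ => ENNReal.ofReal (u1 (s,t) ^ 2 + u2 (s,t) ^ 2) := by
      apply ENNReal.measurable_ofReal.comp
      exact (((hu1cont.comp (continuous_id.prodMk continuous_const)).pow 2).add
        ((hu2cont.comp (continuous_id.prodMk continuous_const)).pow 2)).measurable
    calc ∫⁻ s : ℝ, ENNReal.ofReal ((u1 (s,t) ^ 2 + u2 (s,t) ^ 2) * (v1 (s,t) ^ 2 + v2 (s,t) ^ 2))
        ≤ ∫⁻ s : ℝ, ENNReal.ofReal (u1 (s,t) ^ 2 + u2 (s,t) ^ 2) * E t ^ 2 :=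
          lintegral_mono_ae hae
      _ = (∫⁻ s : ℝ, ENNReal.ofReal (u1 (s,t) ^ 2 + u2 (s,t) ^ 2)) * E t ^ 2 :=
          lintegral_mul_const _ humeas
      _ ≤ (ENNReal.ofReal t * A) * E t ^ 2 :=
          mul_le_mul_left (slice_bound u1 u2 hu1 hu2 t ht) _
      _ = A * (ENNReal.ofReal t * E t ^ 2) := by ring
  rw [lint_UHP_symm _ hFmeas]
  calc (∫⁻ t in Ioi (0:ℝ), ∫⁻ s : ℝ,
          ENNReal.ofReal ((u1 (s,t) ^ 2 + u2 (s,t) ^ 2) * (v1 (s,t) ^ 2 + v2 (s,t) ^ 2)))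
        ^ (1/2:ℝ)
      ≤ (∫⁻ t in Ioi (0:ℝ), A * (ENNReal.ofReal t * E t ^ 2)) ^ (1/2:ℝ) := by
        apply ENNReal.rpow_le_rpow _ (by norm_num)
        apply lintegral_mono_ae
        rw [ae_restrict_iff' measurableSet_Ioi]
        exact Filter.Eventually.of_forall hbound
    _ = (A * XnormSq v1 v2) ^ (1/2:ℝ) := by
        rw [lintegral_const_mul' A _ hAne]
        rfl
    _ = A ^ (1/2:ℝ) * (XnormSq v1 v2) ^ (1/2:ℝ) :=
        ENNReal.mul_rpow_of_nonneg _ _ (by norm_num)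
    _ = ENNReal.ofReal (Real.sqrt (∫ x in UHP, (gradSq u1 x + gradSq u2 x))) *
          (XnormSq v1 v2) ^ (1/2:ℝ) := by
        rw [hAG, ENNReal.ofReal_rpow_of_nonneg hG0 (by norm_num), Real.sqrt_eq_rpow]


end
end

section
/- Let u : ℝ²₊ → ℝ² be smooth with ∫_{ℝ²₊} |∇u|² dx < ∞ and ∫_{ℝ²₊} |u(x)|² x₂^{−2} dx < ∞. Then for all 0 ≤ β₁ < β₂ ≤ π, lim_{r→∞} ∫_{β₁}^{β₂} |u(r cos θ, r sin θ)|² dθ = 0. -/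
open MeasureTheory Filter Set
open scoped ENNReal Topology

noncomputable section

/- ===== auxiliary machinery ===== -/

lemma isOpen_UHP : IsOpen UHP := isOpen_lt continuous_const continuous_snd

lemma image_polar_UHP :
    polarCoord.symm '' (Set.Ioi (0:ℝ) ×ˢ Set.Ioo 0 Real.pi) = UHP := by
  ext x
  constructor
  · rintro ⟨⟨r, θ⟩, ⟨hr, hθ⟩, rfl⟩
    simp only [polarCoord_symm_apply, UHP, Set.mem_setOf_eq]
    exact mul_pos hr (Real.sin_pos_of_pos_of_lt_pi hθ.1 hθ.2)
  · intro hx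
    have hxs : x ∈ polarCoord.source := by
      rw [polarCoord_source]
      exact Or.inr (ne_of_gt hx)
    have hp := polarCoord.map_source hxs
    have hinv := polarCoord.left_inv hxs
    refine ⟨polarCoord x, ⟨?_, ?_⟩, hinv⟩
    · exact hp.1
    · have h2 : (polarCoord x).1 * Real.sin (polarCoord x).2 = x.2 := by
        have := congrArg Prod.snd hinv
        simpa [polarCoord_symm_apply] using this
      have hr : (0:ℝ) < (polarCoord x).1 := hp.1
      have hsin : 0 < Real.sin (polarCoord x).2 := by
        by_contra h
        push_neg at h
        have hx2 : 0 < x.2 := hx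
        nlinarith
      constructor
      · by_contra h
        push_neg at h
        have := Real.sin_nonpos_of_nonpos_of_neg_pi_le h hp.2.1.le
        linarith
      · exact hp.2.2

lemma lintegral_UHP_polar (g : ℝ × ℝ → ℝ≥0∞) :
    ∫⁻ x in UHP, g x = ∫⁻ p in Set.Ioi (0:ℝ) ×ˢ Set.Ioo 0 Real.pi,
      ENNReal.ofReal p.1 * g (polarCoord.symm p) := by
  set B : ℝ × ℝ → ℝ × ℝ →L[ℝ] ℝ × ℝ := fun p =>
    LinearMap.toContinuousLinearMap (Matrix.toLin (Module.Basis.finTwoProd ℝ) (Module.Basis.finTwoProd ℝ)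
      !![Real.cos p.2, -p.1 * Real.sin p.2; Real.sin p.2, p.1 * Real.cos p.2])
  have hs : MeasurableSet (Set.Ioi (0:ℝ) ×ˢ Set.Ioo 0 Real.pi) :=
    measurableSet_Ioi.prod measurableSet_Ioo
  have hder : ∀ p ∈ Set.Ioi (0:ℝ) ×ˢ Set.Ioo 0 Real.pi,
      HasFDerivWithinAt polarCoord.symm (B p) (Set.Ioi (0:ℝ) ×ˢ Set.Ioo 0 Real.pi) p :=
    fun p _ => (hasFDerivAt_polarCoord_symm p).hasFDerivWithinAt
  have hinj : Set.InjOn polarCoord.symm (Set.Ioi (0:ℝ) ×ˢ Set.Ioo 0 Real.pi) := by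
    apply (polarCoord.symm.injOn).mono
    rw [OpenPartialHomeomorph.symm_source]
    refine Set.prod_mono_right (Set.Ioo_subset_Ioo ?_ le_rfl)
    linarith [Real.pi_pos]
  have B_det : ∀ p, (B p).det = p.1 := by
    intro p
    conv_rhs => rw [← one_mul p.1, ← Real.cos_sq_add_sin_sq p.2]
    simp only [B, neg_mul, LinearMap.det_toContinuousLinearMap, LinearMap.det_toLin,
      Matrix.det_fin_two_of, sub_neg_eq_add]
    ring
  rw [← image_polar_UHP,
    lintegral_image_eq_lintegral_abs_det_fderiv_mul volume hs hder hinj g]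
  apply setLIntegral_congr_fun hs
  intro p hp
  dsimp only
  rw [B_det, abs_of_pos hp.1]

lemma fderiv_apply_pair (f : ℝ × ℝ → ℝ) (x : ℝ × ℝ) (a b : ℝ) :
    fderiv ℝ f x (a, b) = a * D1 f x + b * D2 f x := by
  have h : ((a, b) : ℝ × ℝ) = a • ((1:ℝ), (0:ℝ)) + b • ((0:ℝ), (1:ℝ)) := by
    simp [Prod.ext_iff]
  rw [h, map_add, _root_.map_smul, _root_.map_smul, smul_eq_mul, smul_eq_mul, D1, D2]

lemma fderiv_dir_sq_le (f : ℝ × ℝ → ℝ) (x : ℝ × ℝ) (θ : ℝ) :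
    (fderiv ℝ f x (Real.cos θ, Real.sin θ)) ^ 2 ≤ gradSq f x := by
  rw [fderiv_apply_pair, gradSq]
  nlinarith [sq_nonneg (Real.cos θ * D2 f x - Real.sin θ * D1 f x),
    Real.sin_sq_add_cos_sq θ]

/-- The point at angle `θ` and radius `r`. -/
def pt (θ r : ℝ) : ℝ × ℝ := (r * Real.cos θ, r * Real.sin θ)

lemma pt_mem_UHP {θ r : ℝ} (hθ : θ ∈ Set.Ioo 0 Real.pi) (hr : 0 < r) : pt θ r ∈ UHP :=
  mul_pos hr (Real.sin_pos_of_pos_of_lt_pi hθ.1 hθ.2)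

lemma continuous_pt_swap : Continuous (fun p : ℝ × ℝ => pt p.2 p.1) := by
  unfold pt
  exact (continuous_fst.mul (Real.continuous_cos.comp continuous_snd)).prodMk
    (continuous_fst.mul (Real.continuous_sin.comp continuous_snd))

lemma polarCoord_symm_eq_pt (p : ℝ × ℝ) : polarCoord.symm p = pt p.2 p.1 := by
  rw [polarCoord_symm_apply]; rfl

lemma hasDerivAt_comp_ray (u : ℝ × ℝ → ℝ) (hu : ContDiffOn ℝ (⊤ : ℕ∞) u UHP)
    {θ r : ℝ} (hθ : θ ∈ Set.Ioo 0 Real.pi) (hr : 0 < r) :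
    HasDerivAt (fun t => u (pt θ t))
      (fderiv ℝ u (pt θ r) (Real.cos θ, Real.sin θ)) r := by
  have hc : HasDerivAt (fun t : ℝ => pt θ t) (Real.cos θ, Real.sin θ) r :=
    (hasDerivAt_mul_const (Real.cos θ)).prodMk (hasDerivAt_mul_const (Real.sin θ))
  have hmem : pt θ r ∈ UHP := pt_mem_UHP hθ hr
  have hdiff : DifferentiableAt ℝ u (pt θ r) :=
    (hu.contDiffAt (isOpen_UHP.mem_nhds hmem)).differentiableAt (by simp)
  exact (hdiff.hasFDerivAt.comp_hasDerivAt r hc)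

section Main

variable (u1 u2 : ℝ × ℝ → ℝ)

lemma continuousOn_comp_pt (u : ℝ × ℝ → ℝ) (hu : ContinuousOn u UHP) {θ : ℝ}
    (hθ : θ ∈ Set.Ioo 0 Real.pi) :
    ContinuousOn (fun r => u (pt θ r)) (Set.Ioi 0) := by
  apply hu.comp
  · exact Continuous.continuousOn (by unfold pt; exact
      (continuous_id.mul continuous_const).prodMk (continuous_id.mul continuous_const))
  · intro r hr
    exact pt_mem_UHP hθ hr

lemma continuousOn_gradSq_pt (u : ℝ × ℝ → ℝ) (hu : ContDiffOn ℝ (⊤ : ℕ∞) u UHP) {θ : ℝ}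
    (hθ : θ ∈ Set.Ioo 0 Real.pi) :
    ContinuousOn (fun r => gradSq u (pt θ r)) (Set.Ioi 0) := by
  have hf : ContinuousOn (fun x => fderiv ℝ u x) UHP :=
    hu.continuousOn_fderiv_of_isOpen isOpen_UHP (by simp)
  have hptc : ContinuousOn (fun r : ℝ => pt θ r) (Set.Ioi 0) :=
    Continuous.continuousOn (by unfold pt; exact
      (continuous_id.mul continuous_const).prodMk (continuous_id.mul continuous_const))
  have hmaps : Set.MapsTo (fun r : ℝ => pt θ r) (Set.Ioi 0) UHP := fun r hr => pt_mem_UHP hθ hr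
  have h1 : ContinuousOn (fun r => D1 u (pt θ r)) (Set.Ioi 0) :=
    ((hf.comp hptc hmaps).clm_apply continuousOn_const)
  have h2 : ContinuousOn (fun r => D2 u (pt θ r)) (Set.Ioi 0) :=
    ((hf.comp hptc hmaps).clm_apply continuousOn_const)
  exact (h1.pow 2).add (h2.pow 2)

lemma ftc_bound (hu1 : ContDiffOn ℝ (⊤ : ℕ∞) u1 UHP) (hu2 : ContDiffOn ℝ (⊤ : ℕ∞) u2 UHP)
    {θ r₁ r₂ : ℝ} (hθ : θ ∈ Set.Ioo 0 Real.pi) (h1 : 0 < r₁) (h12 : r₁ ≤ r₂) :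
    u1 (pt θ r₂) ^ 2 + u2 (pt θ r₂) ^ 2 ≤
      u1 (pt θ r₁) ^ 2 + u2 (pt θ r₁) ^ 2 +
      ∫ r in r₁..r₂, ((u1 (pt θ r) ^ 2 + u2 (pt θ r) ^ 2) / r +
        r * (gradSq u1 (pt θ r) + gradSq u2 (pt θ r))) := by
  set A1 : ℝ → ℝ := fun r => fderiv ℝ u1 (pt θ r) (Real.cos θ, Real.sin θ) with hA1
  set A2 : ℝ → ℝ := fun r => fderiv ℝ u2 (pt θ r) (Real.cos θ, Real.sin θ) with hA2
  set D : ℝ → ℝ := fun r => 2 * u1 (pt θ r) ^ 1 * A1 r + 2 * u2 (pt θ r) ^ 1 * A2 r with hD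
  have hIcc : Set.uIcc r₁ r₂ = Set.Icc r₁ r₂ := Set.uIcc_of_le h12
  have hsub : Set.Icc r₁ r₂ ⊆ Set.Ioi (0:ℝ) := fun r hr => lt_of_lt_of_le h1 hr.1
  have hderiv : ∀ r ∈ Set.uIcc r₁ r₂,
      HasDerivAt (fun t => u1 (pt θ t) ^ 2 + u2 (pt θ t) ^ 2) (D r) r := by
    intro r hr
    rw [hIcc] at hr
    have hr0 : 0 < r := hsub hr
    have hu1' := hasDerivAt_comp_ray u1 hu1 hθ hr0
    have hu2' := hasDerivAt_comp_ray u2 hu2 hθ hr0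
    exact ((hu1'.pow 2).add (hu2'.pow 2))
  have hcF : ContinuousOn (fun r => u1 (pt θ r) ^ 2 + u2 (pt θ r) ^ 2) (Set.Ioi 0) :=
    ((continuousOn_comp_pt u1 hu1.continuousOn hθ).pow 2).add
      ((continuousOn_comp_pt u2 hu2.continuousOn hθ).pow 2)
  have hcA1 : ContinuousOn A1 (Set.Ioi 0) := by
    have hf : ContinuousOn (fun x => fderiv ℝ u1 x) UHP :=
      hu1.continuousOn_fderiv_of_isOpen isOpen_UHP (by simp)
    exact (hf.comp (Continuous.continuousOn (by unfold pt; exact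
      (continuous_id.mul continuous_const).prodMk (continuous_id.mul continuous_const)))
      (fun r hr => pt_mem_UHP hθ hr)).clm_apply continuousOn_const
  have hcA2 : ContinuousOn A2 (Set.Ioi 0) := by
    have hf : ContinuousOn (fun x => fderiv ℝ u2 x) UHP :=
      hu2.continuousOn_fderiv_of_isOpen isOpen_UHP (by simp)
    exact (hf.comp (Continuous.continuousOn (by unfold pt; exact
      (continuous_id.mul continuous_const).prodMk (continuous_id.mul continuous_const)))
      (fun r hr => pt_mem_UHP hθ hr)).clm_apply continuousOn_const
  have hcD : ContinuousOn D (Set.Ioi 0) := by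
    apply ContinuousOn.add
    · exact (continuousOn_const.mul ((continuousOn_comp_pt u1 hu1.continuousOn hθ).pow 1)).mul hcA1
    · exact (continuousOn_const.mul ((continuousOn_comp_pt u2 hu2.continuousOn hθ).pow 1)).mul hcA2
  have hcRHS : ContinuousOn (fun r => (u1 (pt θ r) ^ 2 + u2 (pt θ r) ^ 2) / r +
      r * (gradSq u1 (pt θ r) + gradSq u2 (pt θ r))) (Set.Ioi 0) := by
    apply ContinuousOn.add
    · exact hcF.div continuousOn_id (fun r hr => ne_of_gt hr)
    · exact continuousOn_id.mul
        ((continuousOn_gradSq_pt u1 hu1 hθ).add (continuousOn_gradSq_pt u2 hu2 hθ))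
  have hintD : IntervalIntegrable D volume r₁ r₂ :=
    (hcD.mono (hIcc ▸ hsub : Set.uIcc r₁ r₂ ⊆ Set.Ioi 0)).intervalIntegrable
  have hintR : IntervalIntegrable (fun r => (u1 (pt θ r) ^ 2 + u2 (pt θ r) ^ 2) / r +
      r * (gradSq u1 (pt θ r) + gradSq u2 (pt θ r))) volume r₁ r₂ :=
    (hcRHS.mono (hIcc ▸ hsub : Set.uIcc r₁ r₂ ⊆ Set.Ioi 0)).intervalIntegrable
  have hFTC : ∫ r in r₁..r₂, D r =
      (u1 (pt θ r₂) ^ 2 + u2 (pt θ r₂) ^ 2) - (u1 (pt θ r₁) ^ 2 + u2 (pt θ r₁) ^ 2) :=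
    intervalIntegral.integral_eq_sub_of_hasDerivAt hderiv hintD
  have hmono : ∫ r in r₁..r₂, D r ≤
      ∫ r in r₁..r₂, ((u1 (pt θ r) ^ 2 + u2 (pt θ r) ^ 2) / r +
        r * (gradSq u1 (pt θ r) + gradSq u2 (pt θ r))) := by
    apply intervalIntegral.integral_mono_on h12 hintD hintR
    intro r hr
    have hr0 : 0 < r := hsub hr
    have hb1 := fderiv_dir_sq_le u1 (pt θ r) θ
    have hb2 := fderiv_dir_sq_le u2 (pt θ r) θ
    have key : D r * r ≤ (u1 (pt θ r) ^ 2 + u2 (pt θ r) ^ 2) +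
        r ^ 2 * (gradSq u1 (pt θ r) + gradSq u2 (pt θ r)) := by
      have e1 := sq_nonneg (u1 (pt θ r) - r * A1 r)
      have e2 := sq_nonneg (u2 (pt θ r) - r * A2 r)
      simp only [hD, pow_one]
      nlinarith [mul_le_mul_of_nonneg_left hb1 (sq_nonneg r),
        mul_le_mul_of_nonneg_left hb2 (sq_nonneg r)]
    have hdiv : D r ≤ ((u1 (pt θ r) ^ 2 + u2 (pt θ r) ^ 2) +
        r ^ 2 * (gradSq u1 (pt θ r) + gradSq u2 (pt θ r))) / r := by
      rw [le_div_iff₀ hr0]; exact key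
    calc D r ≤ _ := hdiv
      _ = (u1 (pt θ r) ^ 2 + u2 (pt θ r) ^ 2) / r +
        r * (gradSq u1 (pt θ r) + gradSq u2 (pt θ r)) := by
        field_simp
  linarith [hFTC ▸ hmono]

end Main

section Main2

variable (u1 u2 : ℝ × ℝ → ℝ)

/-- The combined weight `|∇u|² + |u|²/x₂²`. -/
def Varc (x : ℝ × ℝ) : ℝ :=
  gradSq u1 x + gradSq u2 x + (u1 x ^ 2 + u2 x ^ 2) / x.2 ^ 2

/-- The weight in polar coordinates, with Jacobian. -/
def Warc (p : ℝ × ℝ) : ℝ≥0∞ := ENNReal.ofReal (p.1 * Varc u1 u2 (pt p.2 p.1))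

/-- `|u|²` in polar coordinates `(r, θ)`. -/
def Farc (p : ℝ × ℝ) : ℝ := u1 (pt p.2 p.1) ^ 2 + u2 (pt p.2 p.1) ^ 2

/-- The arc integral of `|u|²`, as a lower Lebesgue integral. -/
def phiArc (β₁ β₂ : ℝ) (r : ℝ) : ℝ≥0∞ :=
  ∫⁻ θ in Set.Ioo β₁ β₂, ENNReal.ofReal (Farc u1 u2 (r, θ))

/-- The tail weight integral. -/
def Tarc (β₁ β₂ : ℝ) (R : ℝ) : ℝ≥0∞ :=
  ∫⁻ p in Set.Ioi R ×ˢ Set.Ioo β₁ β₂, Warc u1 u2 p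

variable {u1 u2}

lemma continuousOn_Varc (hu1 : ContDiffOn ℝ (⊤ : ℕ∞) u1 UHP) (hu2 : ContDiffOn ℝ (⊤ : ℕ∞) u2 UHP) :
    ContinuousOn (Varc u1 u2) UHP := by
  have hg : ∀ u : ℝ × ℝ → ℝ, ContDiffOn ℝ (⊤ : ℕ∞) u UHP → ContinuousOn (fun x => gradSq u x) UHP := by
    intro u hu
    have hf : ContinuousOn (fun x => fderiv ℝ u x) UHP :=
      hu.continuousOn_fderiv_of_isOpen isOpen_UHP (by simp)
    have h1 : ContinuousOn (fun x => D1 u x) UHP := hf.clm_apply continuousOn_const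
    have h2 : ContinuousOn (fun x => D2 u x) UHP := hf.clm_apply continuousOn_const
    exact (h1.pow 2).add (h2.pow 2)
  apply ContinuousOn.add
  · exact (hg u1 hu1).add (hg u2 hu2)
  · exact ((hu1.continuousOn.pow 2).add (hu2.continuousOn.pow 2)).div
      ((continuous_snd.pow 2).continuousOn) (fun x hx => pow_ne_zero _ (ne_of_gt hx))

lemma maps_pt_swap : Set.MapsTo (fun p : ℝ × ℝ => pt p.2 p.1)
    (Set.Ioi (0:ℝ) ×ˢ Set.Ioo 0 Real.pi) UHP :=
  fun p hp => pt_mem_UHP hp.2 hp.1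

lemma continuousOn_Warc (hu1 : ContDiffOn ℝ (⊤ : ℕ∞) u1 UHP) (hu2 : ContDiffOn ℝ (⊤ : ℕ∞) u2 UHP) :
    ContinuousOn (Warc u1 u2) (Set.Ioi (0:ℝ) ×ˢ Set.Ioo 0 Real.pi) := by
  apply ENNReal.continuous_ofReal.comp_continuousOn
  exact continuous_fst.continuousOn.mul
    (((continuousOn_Varc hu1 hu2).comp continuous_pt_swap.continuousOn maps_pt_swap))

lemma continuousOn_Farc (hu1 : ContinuousOn u1 UHP) (hu2 : ContinuousOn u2 UHP) :
    ContinuousOn (Farc u1 u2) (Set.Ioi (0:ℝ) ×ˢ Set.Ioo 0 Real.pi) :=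
  ((hu1.comp continuous_pt_swap.continuousOn maps_pt_swap).pow 2).add
    ((hu2.comp continuous_pt_swap.continuousOn maps_pt_swap).pow 2)

lemma continuousOn_Farc_slice (hu1 : ContinuousOn u1 UHP) (hu2 : ContinuousOn u2 UHP)
    {β₁ β₂ : ℝ} (hsub : Set.Ioo β₁ β₂ ⊆ Set.Ioo 0 Real.pi) {r : ℝ} (hr : 0 < r) :
    ContinuousOn (fun θ => Farc u1 u2 (r, θ)) (Set.Ioo β₁ β₂) := by
  apply (continuousOn_Farc hu1 hu2).comp
    (continuous_const.prodMk continuous_id).continuousOn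
  intro θ hθ
  exact ⟨hr, hsub hθ⟩

lemma Farc_nonneg (p : ℝ × ℝ) : 0 ≤ Farc u1 u2 p := by
  unfold Farc; positivity

lemma Tarc_le_K {β₁ β₂ : ℝ} (hβ : Set.Ioo β₁ β₂ ⊆ Set.Ioo 0 Real.pi) :
    Tarc u1 u2 β₁ β₂ 0 ≤ ∫⁻ x in UHP, ENNReal.ofReal (Varc u1 u2 x) := by
  rw [lintegral_UHP_polar]
  calc Tarc u1 u2 β₁ β₂ 0
      ≤ ∫⁻ p in Set.Ioi (0:ℝ) ×ˢ Set.Ioo 0 Real.pi, Warc u1 u2 p :=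
        lintegral_mono_set (Set.prod_mono_right hβ)
    _ = ∫⁻ p in Set.Ioi (0:ℝ) ×ˢ Set.Ioo 0 Real.pi,
        ENNReal.ofReal p.1 * ENNReal.ofReal (Varc u1 u2 (polarCoord.symm p)) := by
        apply setLIntegral_congr_fun (measurableSet_Ioi.prod measurableSet_Ioo)
        intro p hp
        dsimp only
        rw [Warc, ENNReal.ofReal_mul (le_of_lt hp.1), polarCoord_symm_eq_pt]

lemma Tarc_tendsto (hu1 : ContDiffOn ℝ (⊤ : ℕ∞) u1 UHP) (hu2 : ContDiffOn ℝ (⊤ : ℕ∞) u2 UHP)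
    (hV : IntegrableOn (Varc u1 u2) UHP)
    {β₁ β₂ : ℝ} (hβ : Set.Ioo β₁ β₂ ⊆ Set.Ioo 0 Real.pi) :
    Tendsto (Tarc u1 u2 β₁ β₂) atTop (𝓝 0) := by
  have hK : (∫⁻ x in UHP, ENNReal.ofReal (Varc u1 u2 x)) < ⊤ := hV.lintegral_lt_top
  have hprodmeas : ∀ R : ℝ, MeasurableSet (Set.Ioi R ×ˢ Set.Ioo β₁ β₂) :=
    fun R => measurableSet_Ioi.prod measurableSet_Ioo
  set ν : Measure (ℝ × ℝ) :=
    volume.withDensity ((Set.Ioi (0:ℝ) ×ˢ Set.Ioo β₁ β₂).indicator (Warc u1 u2)) with hν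
  have hνT : ∀ R : ℝ, 0 ≤ R → ν (Set.Ioi R ×ˢ Set.Ioo β₁ β₂) = Tarc u1 u2 β₁ β₂ R := by
    intro R hR
    rw [hν, withDensity_apply _ (hprodmeas R)]
    apply setLIntegral_congr_fun (hprodmeas R)
    intro p hp
    have hpmem : p ∈ Set.Ioi (0:ℝ) ×ˢ Set.Ioo β₁ β₂ :=
      Set.mem_prod.2 ⟨lt_of_le_of_lt hR hp.1, hp.2⟩
    exact Set.indicator_of_mem hpmem (Warc u1 u2)
  have hνfin : ν (Set.Ioi (0:ℝ) ×ˢ Set.Ioo β₁ β₂) ≠ ⊤ := by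
    rw [hνT 0 le_rfl]
    exact (lt_of_le_of_lt (Tarc_le_K hβ) hK).ne
  have hiInter : (⋂ R : ℝ, Set.Ioi R ×ˢ Set.Ioo β₁ β₂) = ∅ := by
    apply Set.eq_empty_iff_forall_notMem.2
    intro p hp
    have := (Set.mem_iInter.1 hp p.1).1
    simp at this
  have hνtend : Tendsto (fun R : ℝ => ν (Set.Ioi R ×ˢ Set.Ioo β₁ β₂)) atTop (𝓝 0) := by
    have h := tendsto_measure_iInter_atTop (μ := ν)
      (s := fun R : ℝ => Set.Ioi R ×ˢ Set.Ioo β₁ β₂)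
      (fun R => (hprodmeas R).nullMeasurableSet)
      (fun a b hab => Set.prod_mono_left (Set.Ioi_subset_Ioi hab))
      ⟨0, hνfin⟩
    rwa [hiInter, measure_empty] at h
  apply hνtend.congr'
  filter_upwards [eventually_ge_atTop (0:ℝ)] with R hR
  exact hνT R hR

lemma g_le_Warc {β₁ β₂ : ℝ} (hβ : Set.Ioo β₁ β₂ ⊆ Set.Ioo 0 Real.pi)
    {θ r : ℝ} (hθ : θ ∈ Set.Ioo β₁ β₂) (hr : 0 < r) :
    ENNReal.ofReal ((u1 (pt θ r) ^ 2 + u2 (pt θ r) ^ 2) / r +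
        r * (gradSq u1 (pt θ r) + gradSq u2 (pt θ r))) ≤ Warc u1 u2 (r, θ) := by
  have hθ' := hβ hθ
  have hsin : 0 < Real.sin θ := Real.sin_pos_of_pos_of_lt_pi hθ'.1 hθ'.2
  have hx2 : 0 < (pt θ r).2 := pt_mem_UHP hθ' hr
  have hx2le : (pt θ r).2 ≤ r := by
    have : r * Real.sin θ ≤ r * 1 := by
      apply mul_le_mul_of_nonneg_left (Real.sin_le_one θ) hr.le
    simpa [pt] using this
  apply ENNReal.ofReal_le_ofReal
  have hF : (0:ℝ) ≤ u1 (pt θ r) ^ 2 + u2 (pt θ r) ^ 2 := by positivity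
  have hle : (u1 (pt θ r) ^ 2 + u2 (pt θ r) ^ 2) / r ^ 2 ≤
      (u1 (pt θ r) ^ 2 + u2 (pt θ r) ^ 2) / (pt θ r).2 ^ 2 := by
    apply div_le_div_of_nonneg_left hF (by positivity)
    exact pow_le_pow_left₀ hx2.le hx2le 2
  have hle2 : (u1 (pt θ r) ^ 2 + u2 (pt θ r) ^ 2) / r ≤
      r * ((u1 (pt θ r) ^ 2 + u2 (pt θ r) ^ 2) / (pt θ r).2 ^ 2) := by
    have heq : (u1 (pt θ r) ^ 2 + u2 (pt θ r) ^ 2) / r =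
        r * ((u1 (pt θ r) ^ 2 + u2 (pt θ r) ^ 2) / r ^ 2) := by
      field_simp
    rw [heq]
    exact mul_le_mul_of_nonneg_left hle hr.le
  show _ ≤ (r, θ).1 * Varc u1 u2 (pt (r, θ).2 (r, θ).1)
  simp only [Varc]
  have hg1 : (0:ℝ) ≤ gradSq u1 (pt θ r) + gradSq u2 (pt θ r) := by
    unfold gradSq; positivity
  calc (u1 (pt θ r) ^ 2 + u2 (pt θ r) ^ 2) / r +
        r * (gradSq u1 (pt θ r) + gradSq u2 (pt θ r))
      ≤ r * ((u1 (pt θ r) ^ 2 + u2 (pt θ r) ^ 2) / (pt θ r).2 ^ 2) +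
        r * (gradSq u1 (pt θ r) + gradSq u2 (pt θ r)) := by linarith
    _ = (r, θ).1 * (gradSq u1 (pt (r, θ).2 (r, θ).1) + gradSq u2 (pt (r, θ).2 (r, θ).1) +
        (u1 (pt (r, θ).2 (r, θ).1) ^ 2 + u2 (pt (r, θ).2 (r, θ).1) ^ 2) /
          (pt (r, θ).2 (r, θ).1).2 ^ 2) := by ring

lemma phiArc_step (hu1 : ContDiffOn ℝ (⊤ : ℕ∞) u1 UHP) (hu2 : ContDiffOn ℝ (⊤ : ℕ∞) u2 UHP)
    {β₁ β₂ : ℝ} (hβ : Set.Ioo β₁ β₂ ⊆ Set.Ioo 0 Real.pi)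
    {R r₁ r₂ : ℝ} (hR : 0 < R) (hRr : R ≤ r₁) (hr12 : r₁ ≤ r₂) :
    phiArc u1 u2 β₁ β₂ r₂ ≤ phiArc u1 u2 β₁ β₂ r₁ + Tarc u1 u2 β₁ β₂ R := by
  have hr₁ : 0 < r₁ := lt_of_lt_of_le hR hRr
  set S := Set.Ioo β₁ β₂ with hSdef
  have hSm : MeasurableSet S := measurableSet_Ioo
  set g : ℝ → ℝ → ℝ := fun θ r => (u1 (pt θ r) ^ 2 + u2 (pt θ r) ^ 2) / r +
      r * (gradSq u1 (pt θ r) + gradSq u2 (pt θ r)) with hgdef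
  have hgcont : ∀ θ ∈ S, ContinuousOn (g θ) (Set.Ioi 0) := by
    intro θ hθ
    have hθ' := hβ hθ
    apply ContinuousOn.add
    · exact (((continuousOn_comp_pt u1 hu1.continuousOn hθ').pow 2).add
        ((continuousOn_comp_pt u2 hu2.continuousOn hθ').pow 2)).div continuousOn_id
        (fun r hr => ne_of_gt hr)
    · exact continuousOn_id.mul
        ((continuousOn_gradSq_pt u1 hu1 hθ').add (continuousOn_gradSq_pt u2 hu2 hθ'))
  have hIccsub : Set.Icc r₁ r₂ ⊆ Set.Ioi (0:ℝ) := fun r hr => lt_of_lt_of_le hr₁ hr.1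
  have hgnonneg : ∀ θ ∈ S, ∀ r ∈ Set.Ioc r₁ r₂, 0 ≤ g θ r := by
    intro θ hθ r hr
    have hr0 : 0 < r := lt_trans hr₁ hr.1
    have hgr : (0:ℝ) ≤ gradSq u1 (pt θ r) + gradSq u2 (pt θ r) := by
      unfold gradSq; positivity
    have hF : (0:ℝ) ≤ u1 (pt θ r) ^ 2 + u2 (pt θ r) ^ 2 := by positivity
    exact add_nonneg (div_nonneg hF hr0.le) (mul_nonneg hr0.le hgr)
  have hIint : ∀ θ ∈ S, IntegrableOn (g θ) (Set.Ioc r₁ r₂) := by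
    intro θ hθ
    exact (((hgcont θ hθ).mono hIccsub).integrableOn_Icc).mono_set Set.Ioc_subset_Icc_self
  have hpoint : ∀ θ ∈ S, ENNReal.ofReal (Farc u1 u2 (r₂, θ)) ≤
      ENNReal.ofReal (Farc u1 u2 (r₁, θ)) +
      ∫⁻ r in Set.Ioc r₁ r₂, ENNReal.ofReal (g θ r) := by
    intro θ hθ
    have hftc := ftc_bound u1 u2 hu1 hu2 (hβ hθ) hr₁ hr12
    have hIeq : (∫ r in r₁..r₂, g θ r) = ∫ r in Set.Ioc r₁ r₂, g θ r :=
      intervalIntegral.integral_of_le hr12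
    have hstep1 : ENNReal.ofReal (Farc u1 u2 (r₂, θ)) ≤
        ENNReal.ofReal (Farc u1 u2 (r₁, θ) + ∫ r in Set.Ioc r₁ r₂, g θ r) := by
      apply ENNReal.ofReal_le_ofReal
      rw [← hIeq]
      exact hftc
    refine hstep1.trans (ENNReal.ofReal_add_le.trans ?_)
    gcongr
    rw [ofReal_integral_eq_lintegral_ofReal (hIint θ hθ)
      ((ae_restrict_iff' measurableSet_Ioc).2 (ae_of_all _ (hgnonneg θ hθ)))]
  have hφae : AEMeasurable (fun θ => ENNReal.ofReal (Farc u1 u2 (r₁, θ)))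
      (volume.restrict S) :=
    ENNReal.measurable_ofReal.comp_aemeasurable
      ((continuousOn_Farc_slice hu1.continuousOn hu2.continuousOn hβ hr₁).aemeasurable hSm)
  have hsub' : Set.Ioc r₁ r₂ ×ˢ S ⊆ Set.Ioi (0:ℝ) ×ˢ Set.Ioo 0 Real.pi :=
    Set.prod_mono (fun r hr => lt_trans hr₁ hr.1) hβ
  have hWae : AEMeasurable (Warc u1 u2)
      ((volume.restrict (Set.Ioc r₁ r₂)).prod (volume.restrict S)) := by
    rw [Measure.prod_restrict, ← Measure.volume_eq_prod]
    exact ((continuousOn_Warc hu1 hu2).mono hsub').aemeasurable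
      (measurableSet_Ioc.prod hSm)
  have hinner : ∫⁻ θ in S, ∫⁻ r in Set.Ioc r₁ r₂, ENNReal.ofReal (g θ r) ≤
      Tarc u1 u2 β₁ β₂ R := by
    calc ∫⁻ θ in S, ∫⁻ r in Set.Ioc r₁ r₂, ENNReal.ofReal (g θ r)
        ≤ ∫⁻ θ in S, ∫⁻ r in Set.Ioc r₁ r₂, Warc u1 u2 (r, θ) := by
          apply lintegral_mono_ae
          filter_upwards [ae_restrict_mem hSm] with θ hθ
          apply lintegral_mono_ae
          filter_upwards [ae_restrict_mem measurableSet_Ioc] with r hr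
          exact g_le_Warc hβ hθ (lt_trans hr₁ hr.1)
      _ = ∫⁻ p in Set.Ioc r₁ r₂ ×ˢ S, Warc u1 u2 p := by
          rw [← lintegral_prod_symm _ hWae, Measure.prod_restrict, ← Measure.volume_eq_prod]
      _ ≤ Tarc u1 u2 β₁ β₂ R := by
          apply lintegral_mono_set
          exact Set.prod_mono_left (fun r hr => lt_of_le_of_lt hRr hr.1)
  calc phiArc u1 u2 β₁ β₂ r₂
      ≤ ∫⁻ θ in S, (ENNReal.ofReal (Farc u1 u2 (r₁, θ)) +
          ∫⁻ r in Set.Ioc r₁ r₂, ENNReal.ofReal (g θ r)) := by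
        apply lintegral_mono_ae
        filter_upwards [ae_restrict_mem hSm] with θ hθ
        exact hpoint θ hθ
    _ = phiArc u1 u2 β₁ β₂ r₁ + ∫⁻ θ in S, ∫⁻ r in Set.Ioc r₁ r₂, ENNReal.ofReal (g θ r) :=
        lintegral_add_left' hφae _
    _ ≤ phiArc u1 u2 β₁ β₂ r₁ + Tarc u1 u2 β₁ β₂ R := by gcongr

lemma phiArc_exists_small (hu1 : ContDiffOn ℝ (⊤ : ℕ∞) u1 UHP) (hu2 : ContDiffOn ℝ (⊤ : ℕ∞) u2 UHP)
    (hV : IntegrableOn (Varc u1 u2) UHP)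
    {β₁ β₂ : ℝ} (hβ : Set.Ioo β₁ β₂ ⊆ Set.Ioo 0 Real.pi)
    {R : ℝ} (hR : 1 ≤ R) {ε : ℝ≥0∞} (hε : 0 < ε) (hεtop : ε ≠ ⊤) :
    ∃ r, R < r ∧ phiArc u1 u2 β₁ β₂ r ≤ ε := by
  by_contra hcon
  push_neg at hcon
  have hR0 : (0:ℝ) < R := lt_of_lt_of_le zero_lt_one hR
  have hTfin : Tarc u1 u2 β₁ β₂ R < ⊤ :=
    lt_of_le_of_lt (le_trans (lintegral_mono_set
      (Set.prod_mono_left (Set.Ioi_subset_Ioi hR0.le))) (Tarc_le_K hβ)) hV.lintegral_lt_top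
  have hsub' : Set.Ioi R ×ˢ Set.Ioo β₁ β₂ ⊆ Set.Ioi (0:ℝ) ×ˢ Set.Ioo 0 Real.pi :=
    Set.prod_mono (Set.Ioi_subset_Ioi hR0.le) hβ
  have haef : AEMeasurable (fun p : ℝ × ℝ => ENNReal.ofReal (p.1⁻¹ * Farc u1 u2 p))
      ((volume.restrict (Set.Ioi R)).prod (volume.restrict (Set.Ioo β₁ β₂))) := by
    rw [Measure.prod_restrict, ← Measure.volume_eq_prod]
    have hc : ContinuousOn (fun p : ℝ × ℝ => p.1⁻¹ * Farc u1 u2 p)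
        (Set.Ioi (0:ℝ) ×ˢ Set.Ioo 0 Real.pi) :=
      (continuous_fst.continuousOn.inv₀ (fun p hp => ne_of_gt hp.1)).mul
        (continuousOn_Farc hu1.continuousOn hu2.continuousOn)
    exact ((ENNReal.continuous_ofReal.comp_continuousOn hc).mono hsub').aemeasurable
      (measurableSet_Ioi.prod measurableSet_Ioo)
  have hchain : ∫⁻ r in Set.Ioi R, (ENNReal.ofReal r⁻¹ * phiArc u1 u2 β₁ β₂ r) ≤
      Tarc u1 u2 β₁ β₂ R := by
    calc ∫⁻ r in Set.Ioi R, (ENNReal.ofReal r⁻¹ * phiArc u1 u2 β₁ β₂ r)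
        = ∫⁻ r in Set.Ioi R, ∫⁻ θ in Set.Ioo β₁ β₂,
            ENNReal.ofReal (r⁻¹ * Farc u1 u2 (r, θ)) := by
          apply lintegral_congr_ae
          filter_upwards [ae_restrict_mem measurableSet_Ioi] with r hr
          have hr0 : (0:ℝ) < r := lt_trans hR0 hr
          simp only [phiArc]
          rw [← lintegral_const_mul' (ENNReal.ofReal r⁻¹) _ ENNReal.ofReal_ne_top]
          exact lintegral_congr (fun θ => (ENNReal.ofReal_mul (inv_nonneg.2 hr0.le)).symm)
      _ = ∫⁻ p in Set.Ioi R ×ˢ Set.Ioo β₁ β₂, ENNReal.ofReal (p.1⁻¹ * Farc u1 u2 p) := by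
          rw [← lintegral_prod _ haef, Measure.prod_restrict, ← Measure.volume_eq_prod]
      _ ≤ Tarc u1 u2 β₁ β₂ R := by
          apply lintegral_mono_ae
          filter_upwards [ae_restrict_mem (measurableSet_Ioi.prod measurableSet_Ioo)] with p hp
          have hp1 : (0:ℝ) < p.1 := lt_trans hR0 hp.1
          have hstep : ENNReal.ofReal (p.1⁻¹ * Farc u1 u2 p) ≤
              ENNReal.ofReal ((u1 (pt p.2 p.1) ^ 2 + u2 (pt p.2 p.1) ^ 2) / p.1 +
                p.1 * (gradSq u1 (pt p.2 p.1) + gradSq u2 (pt p.2 p.1))) := by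
            apply ENNReal.ofReal_le_ofReal
            rw [inv_mul_eq_div]
            have hgr : (0:ℝ) ≤ gradSq u1 (pt p.2 p.1) + gradSq u2 (pt p.2 p.1) := by
              unfold gradSq; positivity
            have : Farc u1 u2 p = u1 (pt p.2 p.1) ^ 2 + u2 (pt p.2 p.1) ^ 2 := rfl
            rw [this]
            exact le_add_of_nonneg_right (mul_nonneg hp1.le hgr)
          exact hstep.trans (g_le_Warc hβ hp.2 hp1)
  have hlint : (∫⁻ r in Set.Ioi R, ENNReal.ofReal r⁻¹) = ⊤ := by
    by_contra hfin
    have hmeas : AEStronglyMeasurable (fun r : ℝ => r⁻¹) (volume.restrict (Set.Ioi R)) :=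
      (continuousOn_id.inv₀ (fun r hr => ne_of_gt (lt_trans hR0 hr))).aestronglyMeasurable
        measurableSet_Ioi
    have hnn : 0 ≤ᵐ[volume.restrict (Set.Ioi R)] fun r : ℝ => r⁻¹ := by
      filter_upwards [ae_restrict_mem measurableSet_Ioi] with r hr
      exact inv_nonneg.2 (le_of_lt (lt_trans hR0 hr))
    have hint : IntegrableOn (fun r : ℝ => r⁻¹) (Set.Ioi R) :=
      ⟨hmeas, (hasFiniteIntegral_iff_ofReal hnn).2 (lt_top_iff_ne_top.2 hfin)⟩
    have hint2 : IntegrableOn (fun x : ℝ => x ^ (-1:ℝ)) (Set.Ioi R) := by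
      apply hint.congr_fun (fun x hx => ?_) measurableSet_Ioi
      exact (Real.rpow_neg_one x).symm
    rw [integrableOn_Ioi_rpow_iff hR0] at hint2
    linarith
  have htop : (∫⁻ r in Set.Ioi R, (ENNReal.ofReal r⁻¹ * ε)) = ⊤ := by
    rw [lintegral_mul_const' ε _ hεtop]
    exact ENNReal.mul_eq_top.2 (Or.inr ⟨hlint, hε.ne'⟩)
  have hlower : (∫⁻ r in Set.Ioi R, (ENNReal.ofReal r⁻¹ * ε)) ≤
      ∫⁻ r in Set.Ioi R, (ENNReal.ofReal r⁻¹ * phiArc u1 u2 β₁ β₂ r) := by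
    apply lintegral_mono_ae
    filter_upwards [ae_restrict_mem measurableSet_Ioi] with r hr
    exact mul_le_mul_right (hcon r hr).le _
  rw [htop] at hlower
  exact absurd (top_le_iff.1 (hlower.trans hchain)) hTfin.ne

end Main2


/-- Decay at infinity on circular arcs for smooth fields with square-integrable gradient
satisfying the Hardy bound. -/
theorem decay_on_arcs (u1 u2 : ℝ × ℝ → ℝ)
    (hu1 : ContDiffOn ℝ (⊤ : ℕ∞) u1 UHP) (hu2 : ContDiffOn ℝ (⊤ : ℕ∞) u2 UHP)
    (hgrad : IntegrableOn (fun x => gradSq u1 x + gradSq u2 x) UHP)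
    (hhardy : IntegrableOn (fun x => (u1 x ^ 2 + u2 x ^ 2) / x.2 ^ 2) UHP)
    (β₁ β₂ : ℝ) (h1 : 0 ≤ β₁) (h12 : β₁ < β₂) (h2 : β₂ ≤ Real.pi) :
    Tendsto (fun r : ℝ => ∫ θ in β₁..β₂,
        (u1 (r * Real.cos θ, r * Real.sin θ) ^ 2 +
         u2 (r * Real.cos θ, r * Real.sin θ) ^ 2)) atTop (𝓝 0) := by
  have hβ : Set.Ioo β₁ β₂ ⊆ Set.Ioo 0 Real.pi :=
    fun θ hθ => ⟨lt_of_le_of_lt h1 hθ.1, lt_of_lt_of_le hθ.2 h2⟩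
  have hV : IntegrableOn (Varc u1 u2) UHP := hgrad.add hhardy
  have hφtend : Tendsto (phiArc u1 u2 β₁ β₂) atTop (𝓝 0) := by
    rw [ENNReal.tendsto_nhds_zero]
    intro ε hε
    rcases eq_or_ne ε ⊤ with rfl | hεtop
    · filter_upwards with r
      exact le_top
    have hhalf : (0:ℝ≥0∞) < ε / 2 := ENNReal.half_pos hε.ne'
    have hhalftop : ε / 2 ≠ ⊤ := by
      simp [ENNReal.div_eq_top, hεtop]
    obtain ⟨R₀, hR₀T, hR₀1⟩ :
        ∃ R₀ : ℝ, Tarc u1 u2 β₁ β₂ R₀ ≤ ε / 2 ∧ 1 ≤ R₀ := by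
      have h := (ENNReal.tendsto_nhds_zero.1 (Tarc_tendsto hu1 hu2 hV hβ)) (ε/2) hhalf
      exact (h.and (eventually_ge_atTop 1)).exists
    obtain ⟨r₀, hr₀R, hφr₀⟩ := phiArc_exists_small hu1 hu2 hV hβ hR₀1 hhalf hhalftop
    filter_upwards [eventually_ge_atTop r₀] with r hr
    calc phiArc u1 u2 β₁ β₂ r
        ≤ phiArc u1 u2 β₁ β₂ r₀ + Tarc u1 u2 β₁ β₂ R₀ :=
          phiArc_step hu1 hu2 hβ (lt_of_lt_of_le zero_lt_one hR₀1) hr₀R.le hr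
      _ ≤ ε / 2 + ε / 2 := add_le_add hφr₀ hR₀T
      _ = ε := ENNReal.add_halves ε
  have heq : ∀ r : ℝ, 0 < r →
      (∫ θ in β₁..β₂, (u1 (r * Real.cos θ, r * Real.sin θ) ^ 2 +
        u2 (r * Real.cos θ, r * Real.sin θ) ^ 2)) = (phiArc u1 u2 β₁ β₂ r).toReal := by
    intro r hr
    rw [intervalIntegral.integral_of_le (le_of_lt h12),
      MeasureTheory.integral_Ioc_eq_integral_Ioo]
    have hmeas : AEStronglyMeasurable (fun θ => u1 (r * Real.cos θ, r * Real.sin θ) ^ 2 +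
        u2 (r * Real.cos θ, r * Real.sin θ) ^ 2) (volume.restrict (Set.Ioo β₁ β₂)) :=
      (continuousOn_Farc_slice hu1.continuousOn hu2.continuousOn hβ
        hr).aestronglyMeasurable measurableSet_Ioo
    rw [MeasureTheory.integral_eq_lintegral_of_nonneg_ae
      (ae_of_all _ (fun θ => add_nonneg (sq_nonneg _) (sq_nonneg _))) hmeas]
    rfl
  have htoReal : Tendsto (fun r => (phiArc u1 u2 β₁ β₂ r).toReal) atTop (𝓝 0) := by
    have h := (ENNReal.tendsto_toReal (by simp : (0:ℝ≥0∞) ≠ ⊤)).comp hφtend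
    rw [ENNReal.toReal_zero] at h
    exact h
  apply htoReal.congr'
  filter_upwards [eventually_gt_atTop (0:ℝ)] with r hr
  exact (heq r hr).symm


end
end
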